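/- With D the elliptical region with foci ±1, semi-axes a = cosh c, b = sinh c (c > 0), and ρ = (a+b)², the Chebyshev polynomial of the first kind T_n satisfies ∬_D |T_n'(z)|² dx dy = (nπ/4)(ρ^n - ρ^{-n}). -/

import Mathlib

/-!
Substitute `z = cos w`. On the strip `0 < Im w`, `cos` is injective modulo `2π`, and
`cos (u + v i)` lies in the ellipse exactly when `v < c`; so `cos` maps the rectangle
`(0, 2π] × (0, c)` injectively onto the ellipse minus a null set of real points. The Jacobian of
`cos` is `|sin w|²` and `T_n'(cos w) sin w = n sin (n w)`, so the integral becomes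
`∬ n² |sin (n w)|² = ∬ n² (cosh 2nv - cos 2nu) / 2 du dv = (nπ/2) sinh 2nc`.
-/

open MeasureTheory Complex Real Polynomial Set

namespace Complex

theorem cos_re (z : ℂ) : (cos z).re = Real.cos z.re * Real.cosh z.im := by
  rw [cos_eq]
  simp [← ofReal_cos, ← ofReal_cosh, ← ofReal_sin, ← ofReal_sinh]

theorem cos_im (z : ℂ) : (cos z).im = -(Real.sin z.re * Real.sinh z.im) := by
  rw [cos_eq]
  simp [← ofReal_cos, ← ofReal_cosh, ← ofReal_sin, ← ofReal_sinh]

theorem sq_norm_sin_add_mul_I (x y : ℝ) :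
    ‖sin (x + y * I)‖ ^ 2 = (Real.cosh (2 * y) - Real.cos (2 * x)) / 2 := by
  rw [sin_add_mul_I, ← ofReal_sin, ← ofReal_cosh, ← ofReal_cos, ← ofReal_sinh, ← ofReal_mul,
    ← ofReal_mul, ← normSq_eq_norm_sq, normSq_add_mul_I, Real.cosh_two_mul, Real.cos_two_mul,
    mul_pow, mul_pow, Real.cosh_sq, Real.sin_sq]
  ring

theorem sq_norm_natCast_mul_sin_nat_mul (n : ℕ) (x y : ℝ) :
    ‖(n : ℂ) * sin (n * (x + y * I))‖ ^ 2 =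
      n ^ 2 * (Real.cosh (2 * n * y) - Real.cos (2 * n * x)) / 2 := by
  have : (n : ℂ) * (x + y * I) = ↑(n * x) + ↑(n * y) * I := by push_cast; ring
  rw [norm_mul, mul_pow, this, sq_norm_sin_add_mul_I, Complex.norm_natCast, mul_assoc, mul_assoc]
  ring

theorem injOn_cos_Ioc_reProdIm_Ioi (a : ℝ) : InjOn cos (Ioc a (a + 2 * π) ×ℂ Ioi 0) := by
  intro x hx y hy hxy
  obtain ⟨hxre, hxim : 0 < x.im⟩ := mem_reProdIm.1 hx
  obtain ⟨hyre, hyim : 0 < y.im⟩ := mem_reProdIm.1 hy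
  obtain ⟨k, hk | hk⟩ := cos_eq_cos_iff.1 hxy
  · have hre : y.re = x.re + k • (2 * π) := by
      rw [hk, zsmul_eq_mul, add_comm, mul_right_comm]; simp [mul_comm]
    refine Complex.ext ?_ (by rw [hk]; simp)
    rw [← (toIocMod_eq_self two_pi_pos).2 hxre, ← (toIocMod_eq_self two_pi_pos).2 hyre, hre,
      toIocMod_add_zsmul]
  · have : y.im = -x.im := by rw [hk]; simp
    linarith

theorem exists_mem_Ioc_reProdIm_Ioi_cos_eq (a : ℝ) {z : ℂ} (hz : z.im ≠ 0) :
    ∃ w ∈ Ioc a (a + 2 * π) ×ℂ Ioi 0, cos w = z := by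
  obtain ⟨w, rfl⟩ := cos_surjective z
  have hw : w.im ≠ 0 := by
    rintro h; simp [cos_im, h] at hz
  wlog hpos : 0 < w.im generalizing w
  · exact cos_neg w ▸ this (-w) (by simpa) (by simpa)
      (by simpa using lt_of_le_of_ne (not_lt.1 hpos) hw)
  refine ⟨w - (toIocDiv two_pi_pos a w.re : ℂ) * (2 * π), ⟨?_, ?_⟩, cos_sub_int_mul_two_pi _ _⟩
  · have := toIocMod_mem_Ioc two_pi_pos a w.re
    rw [← self_sub_toIocDiv_zsmul, zsmul_eq_mul] at this
    simpa using this
  · simpa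

theorem volume_setOf_im_eq_zero : volume {z : ℂ | z.im = 0} = 0 := by
  have hker : (LinearMap.ker imLm : Set ℂ) = {z | z.im = 0} := by ext; simp
  rw [← hker]
  refine Measure.addHaar_submodule _ _ fun h => ?_
  have : I ∈ LinearMap.ker imLm := h ▸ Submodule.mem_top
  simp at this

theorem det_restrictScalars_toSpanSingleton (a : ℂ) :
    ((ContinuousLinearMap.toSpanSingleton ℂ a).restrictScalars ℝ).det = normSq a := by
  rw [ContinuousLinearMap.det, ContinuousLinearMap.coe_restrictScalars,
    LinearMap.det_restrictScalars, ← Algebra.norm_complex_apply]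
  congr
  convert LinearMap.det_mulLeft (R := ℂ) a using 2
  ext; simp [mul_comm]

theorem setIntegral_image_eq_setIntegral_normSq_deriv_smul {E : Type*} [NormedAddCommGroup E]
    [NormedSpace ℝ E] {s : Set ℂ} {f f' : ℂ → ℂ} (hs : MeasurableSet s)
    (hf' : ∀ x ∈ s, HasDerivWithinAt f (f' x) s x) (hf : InjOn f s) (g : ℂ → E) :
    ∫ z in f '' s, g z = ∫ w in s, normSq (f' w) • g (f w) := by
  rw [integral_image_eq_integral_abs_det_fderiv_smul volume hs
    (fun x hx => (hf' x hx).hasFDerivWithinAt.restrictScalars ℝ) hf]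
  simp only [det_restrictScalars_toSpanSingleton, abs_of_nonneg (normSq_nonneg _)]

theorem setIntegral_reProdIm {E : Type*} [NormedAddCommGroup E] [NormedSpace ℝ E] {f : ℂ → E}
    {s t : Set ℝ} (hf : IntegrableOn f (s ×ℂ t)) :
    ∫ z in s ×ℂ t, f z = ∫ x in s, ∫ y in t, f (x + y * I) := by
  have he := volume_preserving_equiv_real_prod.symm
  have hemb := measurableEquivRealProd.symm.measurableEmbedding
  have himage : s ×ℂ t = measurableEquivRealProd.symm '' (s ×ˢ t) := by
    rw [MeasurableEquiv.image_symm]; rfl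
  rw [himage, he.setIntegral_image_emb hemb, Measure.volume_eq_prod, setIntegral_prod]
  · simp only [measurableEquivRealProd_symm_apply, mk_eq_add_mul_I]
  · rw [himage, he.integrableOn_image hemb, Measure.volume_eq_prod] at hf
    exact hf

end Complex

theorem Polynomial.Chebyshev.T_derivative_complex_cos (θ : ℂ) (n : ℤ) :
    (derivative (T ℂ n)).eval (cos θ) * sin θ = n * sin (n * θ) := by
  rw [T_derivative_eq_U, eval_mul, eval_intCast, mul_assoc, U_complex_cos]
  push_cast
  rw [sub_add_cancel]

theorem Real.cosh_add_sinh_pow_sub_inv (x : ℝ) (n : ℕ) :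
    (Real.cosh x + Real.sinh x) ^ n - ((Real.cosh x + Real.sinh x) ^ n)⁻¹ =
      2 * Real.sinh (n * x) := by
  rw [Real.cosh_add_sinh, ← Real.exp_nat_mul, ← Real.exp_neg, Real.sinh_eq]
  ring

def ellipseRegion (c : ℝ) : Set ℂ :=
  {z | Real.sinh c ^ 2 * z.re ^ 2 + Real.cosh c ^ 2 * z.im ^ 2 < Real.cosh c ^ 2 * Real.sinh c ^ 2}

theorem cos_mem_ellipseRegion_iff (c : ℝ) (w : ℂ) : cos w ∈ ellipseRegion c ↔ |w.im| < |c| := by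
  have key : Real.sinh c ^ 2 * (cos w).re ^ 2 + Real.cosh c ^ 2 * (cos w).im ^ 2 -
      Real.cosh c ^ 2 * Real.sinh c ^ 2 =
      (Real.sinh c ^ 2 * Real.cos w.re ^ 2 + Real.cosh c ^ 2 * Real.sin w.re ^ 2) *
        (Real.sinh w.im ^ 2 - Real.sinh c ^ 2) := by
    rw [Complex.cos_re, Complex.cos_im, neg_sq, mul_pow, mul_pow, Real.cosh_sq, Real.cosh_sq,
      Real.sin_sq]
    ring
  have hA : Real.sinh c ^ 2 ≤
      Real.sinh c ^ 2 * Real.cos w.re ^ 2 + Real.cosh c ^ 2 * Real.sin w.re ^ 2 := by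
    nlinarith [Real.cosh_sq c, Real.sin_sq_add_cos_sq w.re, sq_nonneg (Real.sin w.re)]
  have hsinh : |w.im| < |c| ↔ Real.sinh w.im ^ 2 - Real.sinh c ^ 2 < 0 := by
    rw [sub_neg, sq_lt_sq, abs_sinh, abs_sinh, Real.sinh_lt_sinh]
  rw [ellipseRegion, mem_ofPred_eq, ← sub_neg, key, hsinh]
  refine ⟨fun h => neg_of_mul_neg_right h ((sq_nonneg _).trans hA), fun h => ?_⟩
  have : 0 < Real.sinh c ^ 2 := by nlinarith [sq_nonneg (Real.sinh w.im)]
  exact mul_neg_of_pos_of_neg (this.trans_le hA) h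

theorem ellipseRegion_ae_eq_cos_image {c : ℝ} (hc : 0 < c) :
    ellipseRegion c =ᵐ[volume] Complex.cos '' (Ioc 0 (2 * π) ×ℂ Ioo 0 c) := by
  have himage : Complex.cos '' (Ioc 0 (2 * π) ×ℂ Ioo 0 c) ⊆ ellipseRegion c := by
    rintro _ ⟨w, ⟨-, hw0, hwc⟩, rfl⟩
    rwa [cos_mem_ellipseRegion_iff, abs_of_pos hw0, abs_of_pos hc]
  have hcover : ellipseRegion c \ cos '' (Ioc 0 (2 * π) ×ℂ Ioo 0 c) ⊆ {z | z.im = 0} := by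
    rintro z ⟨hzE, hz⟩
    by_contra him
    obtain ⟨w, ⟨hre, him' : 0 < w.im⟩, rfl⟩ := exists_mem_Ioc_reProdIm_Ioi_cos_eq 0 him
    rw [cos_mem_ellipseRegion_iff, abs_of_pos him', abs_of_pos hc] at hzE
    rw [zero_add] at hre
    exact hz ⟨w, ⟨hre, him', hzE⟩, rfl⟩
  rw [ae_eq_set, sdiff_eq_empty.2 himage]
  exact ⟨measure_mono_null hcover volume_setOf_im_eq_zero, measure_empty⟩

theorem integral_Ioo_sq_norm_natCast_mul_sin_nat_mul (n : ℕ) (x : ℝ) {c : ℝ} (hc : 0 ≤ c) :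
    ∫ y in Ioo 0 c, ‖(n : ℂ) * sin (n * (x + y * I))‖ ^ 2 =
      n / 4 * Real.sinh (2 * n * c) - n ^ 2 * Real.cos (2 * n * x) / 2 * c := by
  simp only [sq_norm_natCast_mul_sin_nat_mul]
  rw [← integral_Ioc_eq_integral_Ioo, ← intervalIntegral.integral_of_le hc,
    intervalIntegral.integral_eq_sub_of_hasDerivAt (fun y _ =>
      ((((hasDerivAt_id' y).const_mul (2 * n : ℝ)).sinh.const_mul (n / 4 : ℝ)).sub
        ((hasDerivAt_id' y).const_mul (n ^ 2 * Real.cos (2 * n * x) / 2 : ℝ))).congr_deriv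
        (by ring))
      ((by fun_prop : Continuous _).intervalIntegrable _ _)]
  simp

theorem integral_sq_norm_natCast_mul_sin_nat_mul_reProdIm (n : ℕ) {c : ℝ} (hc : 0 ≤ c) :
    ∫ w in Ioc 0 (2 * π) ×ℂ Ioo 0 c, ‖(n : ℂ) * sin (n * w)‖ ^ 2 =
      n * π * Real.sinh (2 * n * c) / 2 := by
  have hint : IntegrableOn (fun w : ℂ => ‖(n : ℂ) * sin (n * w)‖ ^ 2) (Icc 0 (2 * π) ×ℂ Icc 0 c) :=
    (by fun_prop : Continuous _).continuousOn.integrableOn_compact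
      (isCompact_Icc.reProdIm isCompact_Icc)
  rw [setIntegral_reProdIm (hint.mono_set (reProdIm_subset_iff.2
      (prod_mono Ioc_subset_Icc_self Ioo_subset_Icc_self))),
    ← intervalIntegral.integral_of_le two_pi_pos.le]
  simp only [integral_Ioo_sq_norm_natCast_mul_sin_nat_mul n _ hc]
  have hsin : Real.sin (2 * n * (2 * π)) = 0 := by
    rw [← Real.sin_nat_mul_pi (4 * n)]; push_cast; ring_nf
  rw [intervalIntegral.integral_eq_sub_of_hasDerivAt (fun x _ =>
      ((hasDerivAt_id' x).const_mul (n / 4 * Real.sinh (2 * n * c)) |>.sub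
        ((((hasDerivAt_id' x).const_mul (2 * n : ℝ)).sin.const_mul (n * c / 4 : ℝ)))).congr_deriv
        (by ring))
      ((by fun_prop : Continuous _).intervalIntegrable _ _)]
  simp only [Pi.sub_apply, hsin, mul_zero, sub_zero, Real.sin_zero, sub_self]
  ring

/-- Area integral of `|Tₙ'|²` over the elliptical region with semi-axes
`a = cosh c`, `b = sinh c`: equals `(nπ/4)(ρⁿ - ρ⁻ⁿ)` where `ρ = (a+b)²`. -/
theorem chebyshevT_deriv_norm_ellipse (c : ℝ) (hc : 0 < c) (n : ℕ) :
    (∫ z in {z : ℂ | (Real.sinh c) ^ 2 * z.re ^ 2 + (Real.cosh c) ^ 2 * z.im ^ 2 <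
        (Real.cosh c) ^ 2 * (Real.sinh c) ^ 2},
      ‖(Polynomial.derivative (Polynomial.Chebyshev.T ℂ n)).eval z‖ ^ 2) =
      n * π / 4 *
        ((Real.cosh c + Real.sinh c) ^ (2 * n) -
          ((Real.cosh c + Real.sinh c) ^ (2 * n))⁻¹) := by
  have hR : MeasurableSet (Ioc 0 (2 * π) ×ℂ Ioo 0 c) :=
    (measurable_re measurableSet_Ioc).inter (measurable_im measurableSet_Ioo)
  have hinj : InjOn Complex.cos (Ioc 0 (2 * π) ×ℂ Ioo 0 c) := by
    simpa only [zero_add] using (injOn_cos_Ioc_reProdIm_Ioi 0).mono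
      (reProdIm_subset_iff.2 (prod_mono subset_rfl Ioo_subset_Ioi_self))
  have hJacobian (w : ℂ) :
      normSq (-sin w) • ‖(derivative (Chebyshev.T ℂ n)).eval (cos w)‖ ^ 2 =
        ‖(n : ℂ) * sin (n * w)‖ ^ 2 := by
    rw [normSq_neg, normSq_eq_norm_sq, smul_eq_mul, ← mul_pow, ← norm_mul, mul_comm,
      Chebyshev.T_derivative_complex_cos]
    push_cast
    rfl
  change ∫ z in ellipseRegion c, _ = _
  rw [setIntegral_congr_set (ellipseRegion_ae_eq_cos_image hc),
    setIntegral_image_eq_setIntegral_normSq_deriv_smul hR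
      (fun w _ => (hasDerivAt_cos w).hasDerivWithinAt) hinj]
  simp only [hJacobian]
  rw [integral_sq_norm_natCast_mul_sin_nat_mul_reProdIm n hc.le, Real.cosh_add_sinh_pow_sub_inv]
  push_cast
  ring
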